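/- Let λ be a special symplectic partition of 2m. Then the set {j_min(Δ) : Δ an interval of λ} equals the set of indices j ≥ 1 such that j is odd, λ_j is even, and λ_{j-1} > λ_j (with λ_0 = ∞); and the set {j_max(Δ) : Δ a non-minimal interval of λ} equals the set of indices j ≥ 1 such that j is even, λ_j is even, and λ_j > λ_{j+1}. -/

import Mathlib

open Classical

noncomputable section

/-- A partition: weakly decreasing on indices `j ≥ 1` (parts are `l 1 ≥ l 2 ≥ ...`). -/
def IsPartition (l : ℕ → ℕ) : Prop := ∀ j, 1 ≤ j → l (j + 1) ≤ l j

/-- The parts vanish eventually (finitely many nonzero parts). -/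
def EventuallyZero (l : ℕ → ℕ) : Prop := ∃ N, ∀ j, N ≤ j → l j = 0

/-- Multiplicity of `i` as a part of `l`. -/
def mult (l : ℕ → ℕ) (i : ℕ) : ℕ := Nat.card {j : ℕ | 1 ≤ j ∧ l j = i}

/-- The sum of the parts of `l`. -/
def psum (l : ℕ → ℕ) : ℕ := ∑ᶠ j : ℕ, l (j + 1)

/-- Symplectic: every odd part occurs with even multiplicity. -/
def IsSymplectic (l : ℕ → ℕ) : Prop := ∀ i, Odd i → Even (mult l i)

/-- Orthogonal: every even positive part occurs with even multiplicity. -/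
def IsOrthogonal (l : ℕ → ℕ) : Prop := ∀ i, 0 < i → Even i → Even (mult l i)

/-- Special: `l (2j-1)` and `l (2j)` have the same parity for all `j ≥ 1`. -/
def IsSpecial (l : ℕ → ℕ) : Prop := ∀ j, 1 ≤ j → l (2 * j - 1) % 2 = l (2 * j) % 2

/-- `P^+(λ)`: odd `j` with `λ_j` even and `λ_{j-1} > λ_j` (convention `λ_0 = ∞`). -/
def Pplus (l : ℕ → ℕ) : Set ℕ := {j | Odd j ∧ Even (l j) ∧ (j = 1 ∨ l (j - 1) > l j)}

/-- `P^-(λ)`: even `j ≥ 2` with `λ_j` even and `λ_j > λ_{j+1}`. -/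
def Pminus (l : ℕ → ℕ) : Set ℕ := {j | 2 ≤ j ∧ Even j ∧ Even (l j) ∧ l j > l (j + 1)}

/-- `Q^+(λ)`: even `j ≥ 2` with `λ_j` odd and `λ_{j-1} > λ_j`. -/
def Qplus (l : ℕ → ℕ) : Set ℕ := {j | 2 ≤ j ∧ Even j ∧ Odd (l j) ∧ l (j - 1) > l j}

/-- `Q^-(λ)`: odd `j ≥ 1` with `λ_j` odd and `λ_j > λ_{j+1}`. -/
def Qminus (l : ℕ → ℕ) : Set ℕ := {j | Odd j ∧ Odd (l j) ∧ l j > l (j + 1)}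

/-- Orthogonal version of `P^+`: odd `j` with `λ_j` odd and `λ_{j-1} > λ_j` (`λ_0 = ∞`). -/
def PplusO (l : ℕ → ℕ) : Set ℕ := {j | Odd j ∧ Odd (l j) ∧ (j = 1 ∨ l (j - 1) > l j)}

/-- Orthogonal version of `P^-`: even `j ≥ 2` with `λ_j` odd and `λ_j > λ_{j+1}`. -/
def PminusO (l : ℕ → ℕ) : Set ℕ := {j | 2 ≤ j ∧ Even j ∧ Odd (l j) ∧ l j > l (j + 1)}

/-- The sequence `s(λ)`: `1` on `Q^+`, `-1` on `Q^-`, `0` elsewhere. -/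
def sSeq (l : ℕ → ℕ) (j : ℕ) : ℤ :=
  if j ∈ Qplus l then 1 else if j ∈ Qminus l then -1 else 0

/-- The sequence `ζ(λ)`: `1` on `P^+`, `-1` on `P^-`, `0` elsewhere. -/
def zSeq (l : ℕ → ℕ) (j : ℕ) : ℤ :=
  if j ∈ Pplus l then 1 else if j ∈ Pminus l then -1 else 0

/-- Orthogonal `ζ(λ)`: `1` on `PplusO`, `-1` on `PminusO`, `0` elsewhere. -/
def zSeqO (l : ℕ → ℕ) (j : ℕ) : ℤ :=
  if j ∈ PplusO l then 1 else if j ∈ PminusO l then -1 else 0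

/-- `sp(λ) = λ + s(λ)` (termwise, truncated to ℕ). -/
def spPart (l : ℕ → ℕ) (j : ℕ) : ℕ := ((l j : ℤ) + sSeq l j).toNat

/-- Dominance order on partitions. -/
def Dom (l m : ℕ → ℕ) : Prop :=
  ∀ k, ∑ j ∈ Finset.range k, l (j + 1) ≤ ∑ j ∈ Finset.range k, m (j + 1)

/-- `j_min(i)`: smallest index `j ≥ 1` with `l j = i`. -/
def jminPart (l : ℕ → ℕ) (i : ℕ) : ℕ := sInf {j | 1 ≤ j ∧ l j = i}

/-- `j_max(i)`: largest index `j ≥ 1` with `l j = i`. -/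
def jmaxPart (l : ℕ → ℕ) (i : ℕ) : ℕ := sSup {j | 1 ≤ j ∧ l j = i}

/-- `iSeq 1 > iSeq 2 > ... > iSeq t` enumerates the even positive parts of odd
multiplicity of the symplectic partition `l`, completed by a final `0` if their
number is odd (so that `t` is even). -/
def MarkedSeq (l : ℕ → ℕ) (iSeq : ℕ → ℕ) (t : ℕ) : Prop :=
  Even t ∧
  (∀ h h', 1 ≤ h → h < h' → h' ≤ t → iSeq h' < iSeq h) ∧
  (∀ h, 1 ≤ h → h ≤ t → Even (iSeq h)) ∧
  (∀ h, 1 ≤ h → h ≤ t → iSeq h ≠ 0 → Odd (mult l (iSeq h))) ∧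
  (∀ i, 0 < i → Even i → Odd (mult l i) → ∃ h, 1 ≤ h ∧ h ≤ t ∧ iSeq h = i)

/-- Orthogonal analogue: `iSeq` enumerates the odd parts of odd multiplicity. -/
def MarkedSeqO (l : ℕ → ℕ) (iSeq : ℕ → ℕ) (t : ℕ) : Prop :=
  Even t ∧
  (∀ h h', 1 ≤ h → h < h' → h' ≤ t → iSeq h' < iSeq h) ∧
  (∀ h, 1 ≤ h → h ≤ t → Odd (iSeq h)) ∧
  (∀ h, 1 ≤ h → h ≤ t → Odd (mult l (iSeq h))) ∧
  (∀ i, Odd i → Odd (mult l i) → ∃ h, 1 ≤ h ∧ h ≤ t ∧ iSeq h = i)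

/-- `i` lies in the range `[i_{2h}, i_{2h-1}]` for some `h`. -/
def InRange (iSeq : ℕ → ℕ) (t : ℕ) (i : ℕ) : Prop :=
  ∃ h, 1 ≤ h ∧ 2 * h ≤ t ∧ iSeq (2 * h) ≤ i ∧ i ≤ iSeq (2 * h - 1)

/-- Intervals of a (special symplectic) partition `l`, relative to the marked
sequence `iSeq` of length `t`. -/
def IsItv (l : ℕ → ℕ) (iSeq : ℕ → ℕ) (t : ℕ) (Δ : Set ℕ) : Prop :=
  (∃ h, 1 ≤ h ∧ 2 * h ≤ t ∧
      Δ = {i | (i = 0 ∨ 0 < mult l i) ∧ iSeq (2 * h) ≤ i ∧ i ≤ iSeq (2 * h - 1)}) ∨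
  (∃ i, Even i ∧ (i = 0 ∨ 0 < mult l i) ∧ ¬ InRange iSeq t i ∧ Δ = {i})

/-- Intervals of a (special orthogonal, even) partition `l`. -/
def IsItvO (l : ℕ → ℕ) (iSeq : ℕ → ℕ) (t : ℕ) (Δ : Set ℕ) : Prop :=
  (∃ h, 1 ≤ h ∧ 2 * h ≤ t ∧
      Δ = {i | 0 < mult l i ∧ iSeq (2 * h) ≤ i ∧ i ≤ iSeq (2 * h - 1)}) ∨
  (∃ i, Odd i ∧ 0 < mult l i ∧ ¬ InRange iSeq t i ∧ Δ = {i})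

/-- `J(Δ)`: the set of indices `j ≥ 1` whose part lies in `Δ`. -/
def idxSet (l : ℕ → ℕ) (Δ : Set ℕ) : Set ℕ := {j | 1 ≤ j ∧ l j ∈ Δ}

/-- Good parity at index `j`: `λ_{1,j}` even and `λ_{2,j}` odd. -/
def GoodIdx (l₁ l₂ : ℕ → ℕ) (j : ℕ) : Prop := Even (l₁ j) ∧ Odd (l₂ j)

/-- `J^+`: odd `j` of good parity with a strict decrease at `j-1 → j` for some `d`. -/
def Jplus (l₁ l₂ : ℕ → ℕ) : Set ℕ :=
  {j | Odd j ∧ GoodIdx l₁ l₂ j ∧ (j = 1 ∨ l₁ (j - 1) > l₁ j ∨ l₂ (j - 1) > l₂ j)}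

/-- `J^-`: even `j` of good parity with a strict decrease at `j → j+1` for some `d`. -/
def Jminus (l₁ l₂ : ℕ → ℕ) : Set ℕ :=
  {j | 2 ≤ j ∧ Even j ∧ GoodIdx l₁ l₂ j ∧ (l₁ j > l₁ (j + 1) ∨ l₂ j > l₂ (j + 1))}

/-- The sequence `ξ`: `1` on `J^+`, `-1` on `J^-`, `0` elsewhere. -/
def xiSeq (l₁ l₂ : ℕ → ℕ) (j : ℕ) : ℤ :=
  if j ∈ Jplus l₁ l₂ then 1 else if j ∈ Jminus l₁ l₂ then -1 else 0

/-- The endoscopic induction `λ = λ₁ + λ₂ + ξ` (termwise, truncated to ℕ). -/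
def indPart (l₁ l₂ : ℕ → ℕ) (j : ℕ) : ℕ := ((l₁ j : ℤ) + (l₂ j : ℤ) + xiSeq l₁ l₂ j).toNat

/-!
Write `P(i)` for the number of parts of `λ` exceeding `i` and `N(i)` for the number of marked
values `i_h` exceeding `i`. Lowering `i` past `v > 0` raises `P` by the multiplicity of `v` and `N`
by one or zero according as `v` is marked or not; for a symplectic partition these agree mod 2,
so `P(i) ≡ N(i) (mod 2)`. An interval with top `a` and bottom `b > 0` has
`j_min = P(a) + 1` and `j_max = P(b - 1) = P(b) + mult(b)`, while `N(i_k) = k - 1` and `N(i)` is even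
outside the ranges `[i_{2h}, i_{2h-1}]`. This fixes the parities of `j_min` and `j_max`;
conversely an index of `P^±(λ)` determines its interval through the parity of `N` at `λ_j`.
-/

lemma Set.mem_iff_le_ncard_of_downward_closed {S : Set ℕ} (hS : S.Finite)
    (hpos : ∀ j ∈ S, 1 ≤ j) (hdown : ∀ j ∈ S, ∀ k, 1 ≤ k → k ≤ j → k ∈ S)
    {j : ℕ} (hj : 1 ≤ j) : j ∈ S ↔ j ≤ S.ncard := by
  constructor
  · intro hjS
    calc j = (Set.Icc 1 j).ncard := by simp
      _ ≤ S.ncard := Set.ncard_le_ncard (fun k hk => hdown j hjS k hk.1 hk.2) hS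
  · intro hle
    by_contra hjS
    have hsub : S ⊆ Set.Icc 1 (j - 1) := fun k hk =>
      ⟨hpos k hk, by by_contra hkj; exact hjS (hdown k hk j hj (by omega))⟩
    have := Set.ncard_le_ncard hsub (Set.finite_Icc _ _)
    simp only [Set.ncard_Icc_nat] at this
    omega

lemma Set.ncard_setOf_lt_eq_add (p : ℕ → Prop) (f : ℕ → ℕ) (i : ℕ)
    (hfin : {j | p j ∧ i < f j}.Finite) :
    {j | p j ∧ i < f j}.ncard = {j | p j ∧ i + 1 < f j}.ncard + {j | p j ∧ f j = i + 1}.ncard := by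
  have hfin₁ : {j | p j ∧ i + 1 < f j}.Finite :=
    hfin.subset fun j (hj : p j ∧ i + 1 < f j) => ⟨hj.1, by omega⟩
  have hfin₂ : {j | p j ∧ f j = i + 1}.Finite :=
    hfin.subset fun j (hj : p j ∧ f j = i + 1) => ⟨hj.1, by omega⟩
  rw [← Set.ncard_union_eq _ hfin₁ hfin₂]
  · congr 1
    ext j
    simp only [Set.mem_union, Set.mem_ofPred_eq, ← and_or_left]
    exact and_congr_right fun _ => by omega
  · exact Set.disjoint_left.mpr fun j ⟨_, h₁⟩ ⟨_, h₂⟩ => by omega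

lemma IsPartition.le_of_le {l : ℕ → ℕ} (hpart : IsPartition l) {j j' : ℕ} (hj : 1 ≤ j)
    (hjj' : j ≤ j') : l j' ≤ l j := by
  induction j', hjj' using Nat.le_induction with
  | base => exact le_rfl
  | succ n hn ih => exact (hpart n (hj.trans hn)).trans ih

lemma EventuallyZero.finite_setOf_lt {l : ℕ → ℕ} (hz : EventuallyZero l) (i : ℕ) :
    {j | 1 ≤ j ∧ i < l j}.Finite := by
  obtain ⟨N, hN⟩ := hz
  refine (Set.finite_Iio N).subset fun j (hj : 1 ≤ j ∧ i < l j) => ?_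
  by_contra hjN
  have := hN j (not_lt.mp hjN)
  omega

lemma EventuallyZero.exists_part_eq {l : ℕ → ℕ} (hz : EventuallyZero l) {a : ℕ}
    (ha : a = 0 ∨ 0 < mult l a) : ∃ j, 1 ≤ j ∧ l j = a := by
  rcases ha with rfl | ha
  · obtain ⟨N, hN⟩ := hz
    exact ⟨N + 1, by omega, hN _ (by omega)⟩
  · obtain ⟨⟨j, hj⟩⟩ := (Nat.card_pos_iff.mp ha).1
    exact ⟨j, hj⟩

lemma EventuallyZero.eq_zero_or_mult_pos {l : ℕ → ℕ} (hz : EventuallyZero l) {j : ℕ}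
    (hj : 1 ≤ j) : l j = 0 ∨ 0 < mult l (l j) := by
  refine (Nat.eq_zero_or_pos (l j)).imp_right fun hpos => ?_
  exact (Set.ncard_pos (hz.finite_setOf_lt 0 |>.subset fun k (hk : 1 ≤ k ∧ l k = l j) =>
    ⟨hk.1, by omega⟩)).mpr ⟨j, hj, rfl⟩

def partsAbove (l : ℕ → ℕ) (i : ℕ) : ℕ := {j | 1 ≤ j ∧ i < l j}.ncard

section Partition

variable {l : ℕ → ℕ} (hpart : IsPartition l) (hz : EventuallyZero l)
include hpart hz

lemma lt_iff_le_partsAbove {i j : ℕ} (hj : 1 ≤ j) : i < l j ↔ j ≤ partsAbove l i := by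
  rw [partsAbove, ← Set.mem_iff_le_ncard_of_downward_closed (hz.finite_setOf_lt i)
    (fun _ hk => hk.1) (fun j hj k hk hkj => ⟨hk, hj.2.trans_le (hpart.le_of_le hk hkj)⟩) hj]
  exact (and_iff_right hj).symm

lemma partsAbove_eq {i j : ℕ} (hle : l (j + 1) ≤ i) (hlt : j = 0 ∨ i < l j) :
    partsAbove l i = j := by
  have hnext := lt_iff_le_partsAbove hpart hz (i := i) (j := j + 1) (by omega)
  rcases Nat.eq_zero_or_pos j with rfl | hj
  · omega
  · have := (lt_iff_le_partsAbove hpart hz hj).mp (hlt.resolve_left hj.ne')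
    omega

lemma partsAbove_add_one_eq {a : ℕ} (ha : ∃ j, 1 ≤ j ∧ l j = a) :
    l (partsAbove l a + 1) = a := by
  obtain ⟨j, hj, rfl⟩ := ha
  have hle := (lt_iff_le_partsAbove hpart hz (i := l j) (j := partsAbove l (l j) + 1)
    (by omega)).not.mpr (by omega)
  have hjP := (lt_iff_le_partsAbove hpart hz (i := l j) hj).not.mp (lt_irrefl _)
  have := hpart.le_of_le (by omega : 1 ≤ partsAbove l (l j) + 1) (by omega : _ ≤ j)
  omega

lemma partsAbove_pred_eq {b : ℕ} (hb : 0 < b) (hb' : ∃ j, 1 ≤ j ∧ l j = b) :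
    1 ≤ partsAbove l (b - 1) ∧ l (partsAbove l (b - 1)) = b := by
  obtain ⟨j, hj, rfl⟩ := hb'
  have hjP := (lt_iff_le_partsAbove hpart hz (i := l j - 1) hj).mp (by omega)
  have hlt := (lt_iff_le_partsAbove hpart hz (i := l j - 1) (hj.trans hjP)).mpr le_rfl
  have := hpart.le_of_le hj hjP
  exact ⟨hj.trans hjP, by omega⟩

lemma isLeast_iff_eq_partsAbove_add_one {a b j : ℕ} (ha : ∃ j, 1 ≤ j ∧ l j = a)
    (hba : b ≤ a) : IsLeast {j | 1 ≤ j ∧ b ≤ l j ∧ l j ≤ a} j ↔ j = partsAbove l a + 1 := by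
  have hleast : IsLeast {j | 1 ≤ j ∧ b ≤ l j ∧ l j ≤ a} (partsAbove l a + 1) := by
    have := partsAbove_add_one_eq hpart hz ha
    refine ⟨⟨by omega, by omega, by omega⟩, fun k ⟨hk, _, hka⟩ => ?_⟩
    have := (lt_iff_le_partsAbove hpart hz (i := a) hk).not.mp (by omega)
    omega
  exact ⟨fun h => h.unique hleast, fun h => h ▸ hleast⟩

lemma isGreatest_iff_eq_partsAbove_pred {a b j : ℕ} (hb : 0 < b) (hb' : ∃ j, 1 ≤ j ∧ l j = b)
    (hba : b ≤ a) : IsGreatest {j | 1 ≤ j ∧ b ≤ l j ∧ l j ≤ a} j ↔ j = partsAbove l (b - 1) := by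
  have hgreatest : IsGreatest {j | 1 ≤ j ∧ b ≤ l j ∧ l j ≤ a} (partsAbove l (b - 1)) := by
    have := partsAbove_pred_eq hpart hz hb hb'
    refine ⟨⟨this.1, by omega, by omega⟩, fun k ⟨hk, hbk, _⟩ => ?_⟩
    exact (lt_iff_le_partsAbove hpart hz hk).mp (by omega)
  exact ⟨fun h => h.unique hgreatest, fun h => h ▸ hgreatest⟩

end Partition

lemma partsAbove_eq_add_mult {l : ℕ → ℕ} (hz : EventuallyZero l) (i : ℕ) :
    partsAbove l i = partsAbove l (i + 1) + mult l (i + 1) :=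
  Set.ncard_setOf_lt_eq_add _ _ _ (hz.finite_setOf_lt i)

lemma EventuallyZero.idxSet_eq {l : ℕ → ℕ} (hz : EventuallyZero l) (a b : ℕ) :
    idxSet l {i | (i = 0 ∨ 0 < mult l i) ∧ b ≤ i ∧ i ≤ a} = {j | 1 ≤ j ∧ b ≤ l j ∧ l j ≤ a} := by
  ext j
  exact ⟨fun ⟨hj, _, hb, ha⟩ => ⟨hj, hb, ha⟩,
    fun ⟨hj, hb, ha⟩ => ⟨hj, hz.eq_zero_or_mult_pos hj, hb, ha⟩⟩

lemma idxSet_singleton (l : ℕ → ℕ) (i : ℕ) :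
    idxSet l {i} = {j | 1 ≤ j ∧ i ≤ l j ∧ l j ≤ i} := by
  ext j
  simp only [idxSet, Set.mem_singleton_iff, Set.mem_ofPred_eq, le_antisymm_iff, and_comm]

def markedAbove (iSeq : ℕ → ℕ) (t i : ℕ) : ℕ := {h | (1 ≤ h ∧ h ≤ t) ∧ i < iSeq h}.ncard

section MarkedSeq

variable {l iSeq : ℕ → ℕ} {t : ℕ} (hmark : MarkedSeq l iSeq t)
include hmark

lemma MarkedSeq.lt_of_lt {h h' : ℕ} (h1 : 1 ≤ h) (hh' : h < h') (ht : h' ≤ t) :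
    iSeq h' < iSeq h :=
  hmark.2.1 h h' h1 hh' ht

lemma MarkedSeq.even_iSeq {k : ℕ} (hk : 1 ≤ k) (hkt : k ≤ t) : Even (iSeq k) :=
  hmark.2.2.1 k hk hkt

lemma MarkedSeq.odd_mult_iSeq {k : ℕ} (hk : 1 ≤ k) (hkt : k ≤ t) (hne : iSeq k ≠ 0) :
    Odd (mult l (iSeq k)) :=
  hmark.2.2.2.1 k hk hkt hne

lemma MarkedSeq.exists_iSeq_eq_of_odd_mult {i : ℕ} (hi : 0 < i) (hi_even : Even i)
    (hodd : Odd (mult l i)) : ∃ k, 1 ≤ k ∧ k ≤ t ∧ iSeq k = i :=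
  hmark.2.2.2.2 i hi hi_even hodd

lemma MarkedSeq.le_of_le {h h' : ℕ} (h1 : 1 ≤ h) (hh' : h ≤ h') (ht : h' ≤ t) :
    iSeq h' ≤ iSeq h := by
  rcases hh'.eq_or_lt with rfl | hlt
  · exact le_rfl
  · exact (hmark.lt_of_lt h1 hlt ht).le

lemma MarkedSeq.iSeq_two_mul_lt {h : ℕ} (h1 : 1 ≤ h) (ht : 2 * h ≤ t) :
    iSeq (2 * h) < iSeq (2 * h - 1) :=
  hmark.lt_of_lt (by omega) (by omega) ht

lemma MarkedSeq.exists_part_eq_iSeq (hz : EventuallyZero l) {k : ℕ} (hk : 1 ≤ k) (hkt : k ≤ t)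
    (hne : iSeq k ≠ 0) : ∃ j, 1 ≤ j ∧ l j = iSeq k :=
  hz.exists_part_eq (Or.inr (hmark.odd_mult_iSeq hk hkt hne).pos)

lemma lt_iSeq_iff_le_markedAbove {i k : ℕ} (hk : 1 ≤ k) (hkt : k ≤ t) :
    i < iSeq k ↔ k ≤ markedAbove iSeq t i := by
  rw [markedAbove, ← Set.mem_iff_le_ncard_of_downward_closed
    (S := {h | (1 ≤ h ∧ h ≤ t) ∧ i < iSeq h})
    ((Set.finite_Icc 1 t).subset fun _ hh => hh.1) (fun _ hh => hh.1.1)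
    (fun h hh k hk hkh =>
      ⟨⟨hk, hkh.trans hh.1.2⟩, hh.2.trans_le (hmark.le_of_le hk hkh hh.1.2)⟩) hk]
  exact (and_iff_right ⟨hk, hkt⟩).symm

omit hmark in
lemma markedAbove_le (iSeq : ℕ → ℕ) (t i : ℕ) : markedAbove iSeq t i ≤ t := by
  calc markedAbove iSeq t i ≤ (Set.Icc 1 t).ncard :=
        Set.ncard_le_ncard (fun _ hh => hh.1) (Set.finite_Icc 1 t)
    _ = t := by simp

lemma markedAbove_iSeq {k : ℕ} (hk : 1 ≤ k) (hkt : k ≤ t) :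
    markedAbove iSeq t (iSeq k) = k - 1 := by
  have hlt := (lt_iSeq_iff_le_markedAbove hmark (i := iSeq k) hk hkt).not.mp (lt_irrefl _)
  rcases Nat.lt_or_ge k 2 with hk2 | hk2
  · omega
  · have := (lt_iSeq_iff_le_markedAbove hmark (i := iSeq k) (k := k - 1) (by omega)
      (by omega)).mp (hmark.lt_of_lt (by omega) (by omega) hkt)
    omega

lemma MarkedSeq.inRange {k : ℕ} (hk : 1 ≤ k) (hkt : k ≤ t) : InRange iSeq t (iSeq k) := by
  obtain ⟨s, hs⟩ := hmark.1
  rcases Nat.even_or_odd k with ⟨h, rfl⟩ | ⟨h, rfl⟩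
  · exact ⟨h, by omega, by omega, by rw [two_mul],
      hmark.le_of_le (by omega) (by omega) hkt⟩
  · exact ⟨h + 1, by omega, by omega, hmark.le_of_le hk (by omega) (by omega),
      by rw [show 2 * (h + 1) - 1 = 2 * h + 1 by omega]⟩

lemma inRange_of_odd_markedAbove {i : ℕ} (hodd : Odd (markedAbove iSeq t i)) :
    InRange iSeq t i := by
  obtain ⟨h, hh⟩ := hodd
  obtain ⟨s, hs⟩ := hmark.1
  have hle := markedAbove_le iSeq t i
  have hlt := (lt_iSeq_iff_le_markedAbove hmark (i := i) (k := 2 * h + 1) (by omega)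
    (by omega)).mpr (by omega)
  have hge := (lt_iSeq_iff_le_markedAbove hmark (i := i) (k := 2 * (h + 1)) (by omega)
    (by omega)).not.mpr (by omega)
  exact ⟨h + 1, by omega, by omega, by omega,
    by rw [show 2 * (h + 1) - 1 = 2 * h + 1 by omega]; omega⟩

lemma exists_iSeq_eq_of_inRange {i : ℕ} (hr : InRange iSeq t i)
    (heven : Even (markedAbove iSeq t i)) : ∃ h, 1 ≤ h ∧ 2 * h ≤ t ∧ iSeq (2 * h - 1) = i := by
  obtain ⟨h, h1, ht, hbot, htop⟩ := hr
  refine ⟨h, h1, ht, (htop.antisymm (not_lt.mp fun hlt => ?_)).symm⟩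
  have := (lt_iSeq_iff_le_markedAbove hmark (by omega) (by omega)).mp hlt
  have := (lt_iSeq_iff_le_markedAbove hmark (i := i) (k := 2 * h) (by omega) ht).not.mp
    (not_lt.mpr hbot)
  obtain ⟨s, hs⟩ := heven
  omega

end MarkedSeq

lemma markedAbove_eq_add (iSeq : ℕ → ℕ) (t i : ℕ) :
    markedAbove iSeq t i =
      markedAbove iSeq t (i + 1) + {h | (1 ≤ h ∧ h ≤ t) ∧ iSeq h = i + 1}.ncard :=
  Set.ncard_setOf_lt_eq_add _ _ _ ((Set.finite_Icc 1 t).subset fun _ hh => hh.1)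

lemma ncard_iSeq_eq_mod_two {l iSeq : ℕ → ℕ} {t : ℕ} (hsymp : IsSymplectic l)
    (hmark : MarkedSeq l iSeq t) {v : ℕ} (hv : 0 < v) :
    {h | (1 ≤ h ∧ h ≤ t) ∧ iSeq h = v}.ncard % 2 = mult l v % 2 := by
  obtain ⟨-, hdec, -, hodd, hcomplete⟩ := hmark
  by_cases hv_odd : Odd (mult l v)
  · have hv_even : Even v := by
      by_contra hv_even
      exact Nat.not_even_iff_odd.mpr hv_odd (hsymp v (Nat.not_even_iff_odd.mp hv_even))
    obtain ⟨k, hk, hkt, rfl⟩ := hcomplete v hv hv_even hv_odd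
    have hfiber : {h | (1 ≤ h ∧ h ≤ t) ∧ iSeq h = iSeq k} = {k} := by
      refine Set.eq_singleton_iff_unique_mem.mpr ⟨⟨⟨hk, hkt⟩, rfl⟩, fun h ⟨⟨h1, ht⟩, heq⟩ => ?_⟩
      rcases lt_trichotomy h k with hlt | rfl | hgt
      · exact absurd heq (hdec h k h1 hlt hkt).ne'
      · rfl
      · exact absurd heq (hdec k h hk hgt ht).ne
    rw [hfiber, Set.ncard_singleton, Nat.odd_iff.mp hv_odd]
  · have hfiber : {h | (1 ≤ h ∧ h ≤ t) ∧ iSeq h = v} = ∅ :=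
      Set.eq_empty_of_forall_notMem fun h ⟨⟨h1, ht⟩, heq⟩ =>
        hv_odd (heq ▸ hodd h h1 ht (by omega))
    rw [hfiber, Set.ncard_empty, Nat.even_iff.mp (Nat.not_odd_iff_even.mp hv_odd)]

lemma partsAbove_mod_two {l iSeq : ℕ → ℕ} {t : ℕ} (hpart : IsPartition l) (hz : EventuallyZero l)
    (hsymp : IsSymplectic l) (hmark : MarkedSeq l iSeq t) (i : ℕ) :
    partsAbove l i % 2 = markedAbove iSeq t i % 2 := by
  have hbase : ∀ i, l 1 + iSeq 1 ≤ i → partsAbove l i = 0 ∧ markedAbove iSeq t i = 0 := by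
    intro i hi
    refine ⟨?_, ?_⟩
    · have := (lt_iff_le_partsAbove hpart hz (i := i) le_rfl).not.mp (by omega)
      omega
    · rcases Nat.eq_zero_or_pos t with rfl | ht
      · exact Nat.le_zero.mp (markedAbove_le iSeq 0 i)
      · have := (lt_iSeq_iff_le_markedAbove hmark (i := i) le_rfl ht).not.mp (by omega)
        omega
  suffices ∀ d i, l 1 + iSeq 1 ≤ i + d → partsAbove l i % 2 = markedAbove iSeq t i % 2 from
    this (l 1 + iSeq 1) i (by omega)
  intro d
  induction d with
  | zero =>
    intro i hi
    rw [(hbase i hi).1, (hbase i hi).2]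
  | succ d ih =>
    intro i hi
    have hstep := ncard_iSeq_eq_mod_two hsymp hmark (v := i + 1) (by omega)
    have := ih (i + 1) (by omega)
    rw [partsAbove_eq_add_mult hz, markedAbove_eq_add]
    omega

section Intervals

variable {l iSeq : ℕ → ℕ} {t : ℕ} (hpart : IsPartition l) (hz : EventuallyZero l)
  (hsymp : IsSymplectic l) (hmark : MarkedSeq l iSeq t)
include hpart hz hsymp hmark

lemma mem_Pplus_of_isLeast {Δ : Set ℕ} {j : ℕ} (hΔ : IsItv l iSeq t Δ)
    (hj : IsLeast (idxSet l Δ) j) : j ∈ Pplus l := by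
  obtain ⟨a, b, hba, ha, ha_even, hN, hidx⟩ : ∃ a b, b ≤ a ∧ (∃ j, 1 ≤ j ∧ l j = a) ∧ Even a ∧
      Even (markedAbove iSeq t a) ∧ idxSet l Δ = {j | 1 ≤ j ∧ b ≤ l j ∧ l j ≤ a} := by
    rcases hΔ with ⟨h, h1, ht, rfl⟩ | ⟨i, hi_even, hi, hir, rfl⟩
    · have hlt := hmark.iSeq_two_mul_lt h1 ht
      refine ⟨_, _, hlt.le, hmark.exists_part_eq_iSeq hz (by omega) (by omega) (by omega),
        hmark.even_iSeq (by omega) (by omega), ?_, hz.idxSet_eq _ _⟩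
      rw [markedAbove_iSeq hmark (by omega) (by omega)]
      exact ⟨h - 1, by omega⟩
    · exact ⟨i, i, le_rfl, hz.exists_part_eq hi, hi_even,
        Nat.not_odd_iff_even.mp (mt (inRange_of_odd_markedAbove hmark) hir), idxSet_singleton l i⟩
  rw [hidx, isLeast_iff_eq_partsAbove_add_one hpart hz ha hba] at hj
  subst hj
  have hP := partsAbove_mod_two hpart hz hsymp hmark a
  have hla := partsAbove_add_one_eq hpart hz ha
  obtain ⟨s, hs⟩ := hN
  refine ⟨Nat.odd_iff.mpr (by omega), by rwa [hla], ?_⟩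
  rcases Nat.eq_zero_or_pos (partsAbove l a) with h0 | hpos
  · exact Or.inl (by omega)
  · refine Or.inr ?_
    rw [hla, Nat.add_sub_cancel]
    exact (lt_iff_le_partsAbove hpart hz hpos).mpr le_rfl

lemma exists_isLeast_of_mem_Pplus {j : ℕ} (hj : j ∈ Pplus l) :
    ∃ Δ, IsItv l iSeq t Δ ∧ IsLeast (idxSet l Δ) j := by
  obtain ⟨hj_odd, hl_even, hdrop⟩ := hj
  have hj1 : 1 ≤ j := hj_odd.pos
  have hP : partsAbove l (l j) = j - 1 :=
    partsAbove_eq hpart hz (by rw [Nat.sub_add_cancel hj1]) (by omega)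
  have hN : Even (markedAbove iSeq t (l j)) := by
    have := partsAbove_mod_two hpart hz hsymp hmark (l j)
    obtain ⟨s, hs⟩ := hj_odd
    exact Nat.even_iff.mpr (by omega)
  have hleast : ∀ b ≤ l j, IsLeast {k | 1 ≤ k ∧ b ≤ l k ∧ l k ≤ l j} j := fun b hb =>
    (isLeast_iff_eq_partsAbove_add_one hpart hz ⟨j, hj1, rfl⟩ hb).mpr (by omega)
  by_cases hr : InRange iSeq t (l j)
  · obtain ⟨h, h1, ht, htop⟩ := exists_iSeq_eq_of_inRange hmark hr hN
    refine ⟨_, Or.inl ⟨h, h1, ht, rfl⟩, ?_⟩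
    rw [hz.idxSet_eq, htop]
    exact hleast _ (htop ▸ (hmark.iSeq_two_mul_lt h1 ht).le)
  · exact ⟨{l j}, Or.inr ⟨l j, hl_even, hz.eq_zero_or_mult_pos hj1, hr, rfl⟩,
      idxSet_singleton l _ ▸ hleast _ le_rfl⟩

lemma mem_Pminus_of_isGreatest {Δ : Set ℕ} {j : ℕ} (hΔ : IsItv l iSeq t Δ) (h0 : 0 ∉ Δ)
    (hj : IsGreatest (idxSet l Δ) j) : j ∈ Pminus l := by
  obtain ⟨a, b, hba, hb0, hb, hb_even, hN, hidx⟩ : ∃ a b, b ≤ a ∧ 0 < b ∧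
      (∃ j, 1 ≤ j ∧ l j = b) ∧ Even b ∧ Even (markedAbove iSeq t b + mult l b) ∧
      idxSet l Δ = {j | 1 ≤ j ∧ b ≤ l j ∧ l j ≤ a} := by
    rcases hΔ with ⟨h, h1, ht, rfl⟩ | ⟨i, hi_even, hi, hir, rfl⟩
    · have hb0 : 0 < iSeq (2 * h) :=
        Nat.pos_of_ne_zero fun hb0 => h0 ⟨Or.inl rfl, hb0.le, Nat.zero_le _⟩
      obtain ⟨r, hr⟩ := hmark.odd_mult_iSeq (by omega) ht hb0.ne'
      refine ⟨_, _, (hmark.iSeq_two_mul_lt h1 ht).le, hb0,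
        hmark.exists_part_eq_iSeq hz (by omega) ht hb0.ne', hmark.even_iSeq (by omega) ht, ?_,
        hz.idxSet_eq _ _⟩
      rw [markedAbove_iSeq hmark (by omega) ht, hr]
      exact ⟨h + r, by omega⟩
    · have hi0 : 0 < i := Nat.pos_of_ne_zero fun hi0 => h0 (hi0 ▸ rfl)
      have hmult : Even (mult l i) := by
        by_contra hodd
        obtain ⟨k, hk, hkt, rfl⟩ :=
          hmark.exists_iSeq_eq_of_odd_mult hi0 hi_even (Nat.not_even_iff_odd.mp hodd)
        exact hir (hmark.inRange hk hkt)
      have hN := Nat.not_odd_iff_even.mp (mt (inRange_of_odd_markedAbove hmark) hir)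
      exact ⟨i, i, le_rfl, hi0, hz.exists_part_eq hi, hi_even, hN.add hmult, idxSet_singleton l i⟩
  rw [hidx, isGreatest_iff_eq_partsAbove_pred hpart hz hb0 hb hba] at hj
  subst hj
  obtain ⟨hj1, hlj⟩ := partsAbove_pred_eq hpart hz hb0 hb
  have hstep := partsAbove_eq_add_mult hz (b - 1)
  rw [Nat.sub_add_cancel hb0] at hstep
  have hpar := partsAbove_mod_two hpart hz hsymp hmark b
  have hnext := (lt_iff_le_partsAbove hpart hz (i := b - 1)
    (j := partsAbove l (b - 1) + 1) (by omega)).not.mpr (by omega)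
  obtain ⟨s, hs⟩ := hN
  exact ⟨by omega, Nat.even_iff.mpr (by omega), by rwa [hlj], by omega⟩

lemma exists_isGreatest_of_mem_Pminus {j : ℕ} (hj : j ∈ Pminus l) :
    ∃ Δ, IsItv l iSeq t Δ ∧ 0 ∉ Δ ∧ IsGreatest (idxSet l Δ) j := by
  obtain ⟨hj2, ⟨s, hs⟩, hl_even, hdrop⟩ := hj
  have hb0 : 0 < l j := by omega
  have hP : partsAbove l (l j - 1) = j := partsAbove_eq hpart hz (by omega) (Or.inr (by omega))
  have hstep := partsAbove_eq_add_mult hz (l j - 1)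
  rw [Nat.sub_add_cancel hb0] at hstep
  have hpar := partsAbove_mod_two hpart hz hsymp hmark (l j)
  have hgreatest : ∀ a, l j ≤ a → IsGreatest {k | 1 ≤ k ∧ l j ≤ l k ∧ l k ≤ a} j := fun a ha =>
    (isGreatest_iff_eq_partsAbove_pred hpart hz hb0 ⟨j, by omega, rfl⟩ ha).mpr hP.symm
  rcases Nat.even_or_odd (mult l (l j)) with ⟨r, hr⟩ | hmult
  · have hr : ¬ InRange iSeq t (l j) := fun hrange => by
      obtain ⟨h, h1, ht, htop⟩ :=
        exists_iSeq_eq_of_inRange hmark hrange (Nat.even_iff.mpr (by omega))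
      have := hmark.odd_mult_iSeq (k := 2 * h - 1) (by omega) (by omega) (by omega)
      rw [htop, hr] at this
      exact Nat.not_even_iff_odd.mpr this ⟨r, rfl⟩
    refine ⟨{l j}, Or.inr ⟨l j, hl_even, hz.eq_zero_or_mult_pos (by omega), hr, rfl⟩,
      fun h => hb0.ne h, idxSet_singleton l _ ▸ hgreatest _ le_rfl⟩
  · obtain ⟨k, hk, hkt, hkj⟩ := hmark.exists_iSeq_eq_of_odd_mult hb0 hl_even hmult
    have hN := markedAbove_iSeq hmark hk hkt
    rw [hkj] at hN
    obtain ⟨r, hr⟩ := hmult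
    obtain ⟨h, rfl⟩ : ∃ h, k = 2 * h := ⟨k / 2, by omega⟩
    refine ⟨_, Or.inl ⟨h, by omega, hkt, rfl⟩, fun ⟨_, hb, _⟩ => by omega, ?_⟩
    rw [hz.idxSet_eq, hkj]
    exact hgreatest _ (hkj ▸ (hmark.iSeq_two_mul_lt (by omega) hkt).le)

end Intervals

theorem interval_extremes_general (l iSeq : ℕ → ℕ) (t : ℕ)
    (hpart : IsPartition l) (hzero : EventuallyZero l)
    (hsymp : IsSymplectic l) (hmark : MarkedSeq l iSeq t) :
    {j | ∃ Δ, IsItv l iSeq t Δ ∧ IsLeast (idxSet l Δ) j} = Pplus l ∧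
    {j | ∃ Δ, IsItv l iSeq t Δ ∧ 0 ∉ Δ ∧ IsGreatest (idxSet l Δ) j} = Pminus l := by
  refine ⟨Set.ext fun j => ⟨?_, exists_isLeast_of_mem_Pplus hpart hzero hsymp hmark⟩,
    Set.ext fun j => ⟨?_, exists_isGreatest_of_mem_Pminus hpart hzero hsymp hmark⟩⟩
  · rintro ⟨Δ, hΔ, hj⟩
    exact mem_Pplus_of_isLeast hpart hzero hsymp hmark hΔ hj
  · rintro ⟨Δ, hΔ, h0, hj⟩
    exact mem_Pminus_of_isGreatest hpart hzero hsymp hmark hΔ h0 hj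

/-- for a special symplectic partition `λ`, the minima `j_min(Δ)` of
the intervals of `λ` are exactly the odd `j` with `λ_j` even and `λ_{j-1} > λ_j`,
and the maxima `j_max(Δ)` over non-minimal intervals are exactly the even `j` with
`λ_j` even and `λ_j > λ_{j+1}`. -/
theorem interval_extremes (m : ℕ) (l iSeq : ℕ → ℕ) (t : ℕ)
    (hpart : IsPartition l) (hzero : EventuallyZero l) (hsum : psum l = 2 * m)
    (hsymp : IsSymplectic l) (hspec : IsSpecial l) (hmark : MarkedSeq l iSeq t) :
    {j | ∃ Δ, IsItv l iSeq t Δ ∧ IsLeast (idxSet l Δ) j} = Pplus l ∧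
    {j | ∃ Δ, IsItv l iSeq t Δ ∧ 0 ∉ Δ ∧ IsGreatest (idxSet l Δ) j} = Pminus l :=
  interval_extremes_general l iSeq t hpart hzero hsymp hmark
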